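/- For the longest element w_0 of a finite Coxeter group, every subset K ⊆ I is a right block of w_0, and the corresponding cutting point w_0^K is the maximal element of the right descent class consisting of elements whose right descent set is the complement of K; moreover _K w_0 is the longest element of the parabolic subgroup W_K. -/

import Mathlib

open scoped Classical

noncomputable section

variable {B W : Type*} [Group W] {M : CoxeterMatrix B}

/-- The elementary bubble antisorting operator `π_i` on a Coxeter group:
`w·π_i = w` if `i` is a right descent of `w`, and `w·π_i = w s_i` otherwise. -/
noncomputable def piOp (cs : CoxeterSystem M W) (i : B) : W → W :=
  fun w => if cs.IsRightDescent w i then w else w * cs.simple i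

/-- The elementary bubble sorting operator `π̄_i` on a Coxeter group:
`w·π̄_i = w s_i` if `i` is a right descent of `w`, and `w·π̄_i = w` otherwise. -/
noncomputable def pibOp (cs : CoxeterSystem M W) (i : B) : W → W :=
  fun w => if cs.IsRightDescent w i then w * cs.simple i else w

/-- The biHecke monoid: the submonoid of `Function.End W` generated by the antisorting
operators `π_i` and the sorting operators `π̄_i`. -/
noncomputable def biHecke (cs : CoxeterSystem M W) : Submonoid (Function.End W) :=
  Submonoid.closure ({f | ∃ i, f = piOp cs i} ∪ {f | ∃ i, f = pibOp cs i})

/-- Left weak order: `u ≤_L v` iff `ℓ(v u⁻¹) + ℓ(u) = ℓ(v)`. -/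
noncomputable def leL (cs : CoxeterSystem M W) (u v : W) : Prop :=
  cs.length (v * u⁻¹) + cs.length u = cs.length v

/-- Right weak order: `u ≤_R v` iff `ℓ(u) + ℓ(u⁻¹ v) = ℓ(v)`. -/
noncomputable def leR (cs : CoxeterSystem M W) (u v : W) : Prop :=
  cs.length u + cs.length (u⁻¹ * v) = cs.length v

/-- Bruhat order: `u ≤_B v` iff some reduced word of `v` has a subword with product `u`. -/
noncomputable def leB (cs : CoxeterSystem M W) (u v : W) : Prop :=
  ∃ l : List B, cs.IsReduced l ∧ cs.wordProd l = v ∧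
    ∃ l' : List B, l'.Sublist l ∧ cs.wordProd l' = u

/-- Right action of a word of operators: apply the operators from left to right. -/
noncomputable def actWord (ops : B → W → W) (l : List B) (w : W) : W :=
  l.foldl (fun x i => ops i x) w

/-- The function `e_w = π_{w⁻¹ w₀} π̄_{w₀ w}` (given reduced words `l1` for `w⁻¹ w₀` and
`l2` for `w₀ w`), acting on the right. -/
noncomputable def eIdem (cs : CoxeterSystem M W) (l1 l2 : List B) : W → W :=
  fun x => actWord (pibOp cs) l2 (actWord (piOp cs) l1 x)

/-- The parabolic subgroup `W_K`. -/
noncomputable def parab (cs : CoxeterSystem M W) (K : Set B) : Subgroup W :=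
  Subgroup.closure (cs.simple '' K)

/-- `K` is a right block of `w` if `w W_K = W_J w` for some `J`. -/
noncomputable def isRightBlock (cs : CoxeterSystem M W) (w : W) (K : Set B) : Prop :=
  ∃ J : Set B, (fun x => w * x) '' (parab cs K : Set W) = (fun x => x * w) '' (parab cs J : Set W)

/-- `J` is a left block of `w` if `w W_K = W_J w` for some `K`. -/
noncomputable def isLeftBlock (cs : CoxeterSystem M W) (w : W) (J : Set B) : Prop :=
  ∃ K : Set B, (fun x => w * x) '' (parab cs K : Set W) = (fun x => x * w) '' (parab cs J : Set W)

/-- The cutting relation: `v ⊑ w` iff `v = w^K` for some right block `K` of `w`, i.e.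
`w = v · u` with `u ∈ W_K` and `v` has no right descents in `K`. -/
noncomputable def cuts (cs : CoxeterSystem M W) (v w : W) : Prop :=
  ∃ K J : Set B,
    ((fun x => w * x) '' (parab cs K : Set W) = (fun x => x * w) '' (parab cs J : Set W)) ∧
    ∃ u ∈ parab cs K, w = v * u ∧ ∀ k ∈ K, ¬ cs.IsRightDescent v k

/-- Covering relation of left weak order. -/
noncomputable def covL (cs : CoxeterSystem M W) (x y : W) : Prop :=
  leL cs x y ∧ x ≠ y ∧ ∀ z, leL cs x z → leL cs z y → z = x ∨ z = y

end

/-!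
The tool is the left inversion set `N(w)` of reflections `t` with `ℓ(t w) < ℓ(w)`. The reflection
cocycle, a lift of `W` into `(W → ℤˣ) ⋊ W`, shows that `N(w)` has `ℓ(w)` elements and
`N(u v) = N(u) ∆ u N(v) u⁻¹`; so `ℓ(u v) = ℓ(u) + ℓ(v)` as soon as no left inversion of `v` is a
right inversion of `u`. Two instances of this drive the theorem. If `v` has no right descent in
`K`, then `v` is the shortest element of `v W_K` and `ℓ(v x) = ℓ(v) + ℓ(x)` for `x ∈ W_K`; this
makes `u` the longest element of `W_K`, and `w₀^K` the largest element with descent set `Kᶜ`.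
Since `N(w₀)` contains every reflection, `ℓ(w₀ x) = ℓ(w₀) - ℓ(x)`; hence `w₀ s_k w₀⁻¹` has length
one, i.e. is a simple reflection, and `w₀ W_K = W_J w₀`. That `s_i ∉ W_K` for `i ∉ K` is read
off the geometric representation, in which `W_K` fixes the `i`-th coordinate.
-/

open Real

lemma sum_range_sin_add_eq_zero {θ : ℝ} (hθ : sin θ ≠ 0) {m : ℕ} (hm : m * θ = π) (A : ℝ) :
    ∑ n ∈ Finset.range m, sin (A + 2 * n * θ) = 0 := by
  have htel : ∀ n : ℕ, sin θ * (2 * sin (A + 2 * n * θ)) =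
      cos (A - θ + 2 * n * θ) - cos (A - θ + 2 * (n + 1 : ℕ) * θ) := by
    intro n
    rw [show sin θ * (2 * sin (A + 2 * n * θ)) = 2 * sin (A + 2 * n * θ) * sin θ by ring,
      two_mul_sin_mul_sin]
    push_cast
    ring_nf
  have hsum : sin θ * (2 * ∑ n ∈ Finset.range m, sin (A + 2 * n * θ)) = 0 := by
    rw [Finset.mul_sum, Finset.mul_sum, Finset.sum_congr rfl fun n _ => htel n,
      Finset.sum_range_sub', Nat.cast_zero, mul_zero, zero_mul, add_zero, mul_assoc, hm,
      cos_add_two_pi, sub_self]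
  simpa [hθ] using hsum

namespace CoxeterMatrix

variable {B : Type*} (M : CoxeterMatrix B)

/-- `v ↦ ⟨e_a, v⟩` for the form on `B →₀ ℝ` with `⟨e_a, e_b⟩ = -cos (π / M a b)`. -/
noncomputable def cosForm (a : B) : (B →₀ ℝ) →ₗ[ℝ] ℝ :=
  Finsupp.linearCombination ℝ fun b => -cos (π / M a b)

noncomputable def geomReflection (a : B) : Module.End ℝ (B →₀ ℝ) :=
  LinearMap.id - (M.cosForm a).smulRight ((2 : ℝ) • Finsupp.single a 1)

variable {M}

lemma cosForm_single (a b : B) : M.cosForm a (Finsupp.single b 1) = -cos (π / M a b) := by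
  simp [cosForm]

lemma cosForm_single_self (a : B) : M.cosForm a (Finsupp.single a 1) = 1 := by
  simp [cosForm_single]

lemma geomReflection_apply (a : B) (v : B →₀ ℝ) :
    M.geomReflection a v = v - (2 * M.cosForm a v) • Finsupp.single a 1 := by
  simp [geomReflection, mul_comm]

lemma geomReflection_apply_of_ne {a i : B} (h : i ≠ a) (v : B →₀ ℝ) :
    M.geomReflection a v i = v i := by
  simp [geomReflection_apply, Ne.symm h]

lemma geomReflection_single_self (a : B) :
    M.geomReflection a (Finsupp.single a 1) = -Finsupp.single a 1 := by
  rw [geomReflection_apply, cosForm_single_self]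
  module

lemma geomReflection_mul_self (a : B) : M.geomReflection a * M.geomReflection a = 1 := by
  refine LinearMap.ext fun v => ?_
  rw [Module.End.mul_apply, geomReflection_apply a v, map_sub, map_smul,
    geomReflection_single_self, geomReflection_apply, Module.End.one_apply]
  module

lemma geomReflection_plane_left (a b : B) (x y : ℝ) :
    M.geomReflection a (x • Finsupp.single a 1 + y • Finsupp.single b 1) =
      (2 * cos (π / M a b) * y - x) • Finsupp.single a 1 + y • Finsupp.single b 1 := by
  simp only [geomReflection_apply, map_add, map_smul, cosForm_single, M.diagonal, Nat.cast_one,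
    div_one, cos_pi]
  module

lemma geomReflection_plane_right (a b : B) (x y : ℝ) :
    M.geomReflection b (x • Finsupp.single a 1 + y • Finsupp.single b 1) =
      x • Finsupp.single a 1 + (2 * cos (π / M a b) * x - y) • Finsupp.single b 1 := by
  simp only [geomReflection_apply, map_add, map_smul, cosForm_single, M.diagonal, Nat.cast_one,
    div_one, cos_pi, M.symmetric b a]
  module

variable {a b : B}

/-- `σ_a σ_b` rotates the plane `ℝ e_a + ℝ e_b` by `2π / M a b`. -/
lemma geomReflection_mul_pow_plane (n : ℕ) (A : ℝ) :
    ((M.geomReflection a * M.geomReflection b) ^ n)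
        (sin A • Finsupp.single a 1 + sin (A - π / M a b) • Finsupp.single b 1) =
      sin (A + 2 * n * (π / M a b)) • Finsupp.single a 1 +
        sin (A - π / M a b + 2 * n * (π / M a b)) • Finsupp.single b 1 := by
  induction n generalizing A with
  | zero => simp
  | succ n ih =>
    have key : ∀ X, 2 * cos (π / M a b) * sin X - sin (X - π / M a b) = sin (X + π / M a b) :=
      fun X => by rw [sin_add, sin_sub]; ring
    have key' := key (A + π / M a b)
    rw [add_sub_cancel_right] at key'
    rw [pow_succ, Module.End.mul_apply, Module.End.mul_apply, geomReflection_plane_right, key,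
      geomReflection_plane_left, key', show sin (A + π / M a b) =
        sin (A + π / M a b + π / M a b - π / M a b) by rw [add_sub_cancel_right], ih]
    push_cast
    ring_nf

lemma sum_geomReflection_mul_pow_plane (hab : a ≠ b) (hm : M a b ≠ 0) (x y : ℝ) :
    (∑ n ∈ Finset.range (M a b), (M.geomReflection a * M.geomReflection b) ^ n)
      (x • Finsupp.single a 1 + y • Finsupp.single b 1) = 0 := by
  have hθ : 0 < π / M a b := div_pos pi_pos (by exact_mod_cast Nat.pos_of_ne_zero hm)
  have hθπ : π / M a b < π := by
    have : (2 : ℝ) ≤ M a b := by have := M.off_diagonal a b hab; exact_mod_cast (by omega)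
    rw [div_lt_iff₀ (by linarith)]
    nlinarith [pi_pos]
  have hsin : sin (π / M a b) ≠ 0 := (sin_pos_of_pos_of_lt_pi hθ hθπ).ne'
  have hmθ : (M a b : ℝ) * (π / M a b) = π := by field_simp
  have horbit : ∀ A, (∑ n ∈ Finset.range (M a b), (M.geomReflection a * M.geomReflection b) ^ n)
      (sin A • Finsupp.single a 1 + sin (A - π / M a b) • Finsupp.single b 1) = 0 := by
    intro A
    simp only [LinearMap.sum_apply, geomReflection_mul_pow_plane,
      Finset.sum_add_distrib, ← Finset.sum_smul, sum_range_sin_add_eq_zero hsin hmθ, zero_smul,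
      add_zero]
  have hea := horbit (π / M a b)
  have heb := horbit 0
  simp only [sub_self, sin_zero, zero_smul, add_zero, zero_add, zero_sub, sin_neg, neg_smul,
    map_neg, map_smul, neg_eq_zero, smul_eq_zero, hsin, false_or] at hea heb
  rw [map_add, map_smul, map_smul, hea, heb, smul_zero, smul_zero, add_zero]

lemma geomReflection_mul_pow_eq_one (hab : a ≠ b) (hm : M a b ≠ 0) :
    (M.geomReflection a * M.geomReflection b) ^ (M a b) = 1 := by
  have := geom_sum_mul (M.geomReflection a * M.geomReflection b) (M a b)
  rw [← sub_eq_zero, ← this]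
  refine LinearMap.ext fun v => ?_
  have hstep : (M.geomReflection a * M.geomReflection b - 1) v =
      (-(2 * M.cosForm a (M.geomReflection b v))) • Finsupp.single a 1 +
        (-(2 * M.cosForm b v)) • Finsupp.single b 1 := by
    rw [LinearMap.sub_apply, Module.End.mul_apply, geomReflection_apply a, geomReflection_apply b,
      Module.End.one_apply]
    module
  rw [Module.End.mul_apply, hstep, sum_geomReflection_mul_pow_plane hab hm, LinearMap.zero_apply]

variable (M)

noncomputable def geomReflectionUnit (a : B) : (Module.End ℝ (B →₀ ℝ))ˣ :=
  ⟨M.geomReflection a, M.geomReflection a, M.geomReflection_mul_self a,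
    M.geomReflection_mul_self a⟩

lemma isLiftable_geomReflectionUnit : M.IsLiftable M.geomReflectionUnit := by
  intro a b
  rcases eq_or_ne a b with rfl | hab
  · rw [M.diagonal, pow_one]
    exact Units.ext (M.geomReflection_mul_self a)
  rcases eq_or_ne (M a b) 0 with hm | hm
  · rw [hm, pow_zero]
  · exact Units.ext (by simpa [geomReflectionUnit] using geomReflection_mul_pow_eq_one hab hm)

end CoxeterMatrix

noncomputable def conjArrow {W : Type*} [Group W] : W →* MulAut (W → ℤˣ) :=
  mulAutArrow.comp (ConjAct.toConjAct : W ≃* ConjAct W).toMonoidHom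

lemma conjArrow_apply {W : Type*} [Group W] (w : W) (f : W → ℤˣ) (t : W) :
    conjArrow w f t = f (w⁻¹ * t * w) := by
  change f _ = _
  simp [ConjAct.smul_def]

namespace CoxeterSystem

variable {B W : Type*} [Group W] {M : CoxeterMatrix B} (cs : CoxeterSystem M W)

local prefix:100 "s " => cs.simple
local prefix:100 "ℓ " => cs.length

noncomputable def geometricRepresentation : W →* (Module.End ℝ (B →₀ ℝ))ˣ :=
  cs.lift ⟨M.geomReflectionUnit, M.isLiftable_geomReflectionUnit⟩

lemma geometricRepresentation_simple (i : B) :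
    (cs.geometricRepresentation (s i) : Module.End ℝ (B →₀ ℝ)) = M.geomReflection i := by
  simp [geometricRepresentation, CoxeterMatrix.geomReflectionUnit]

noncomputable def signedWordProd (ω : List B) : (W → ℤˣ) ⋊[conjArrow] W :=
  ⟨fun t => (-1) ^ (cs.leftInvSeq ω).count t, cs.wordProd ω⟩

lemma signedWordProd_nil : cs.signedWordProd [] = 1 := by
  ext <;> simp [signedWordProd]

lemma signedWordProd_cons (i : B) (ω : List B) :
    cs.signedWordProd (i :: ω) = cs.signedWordProd [i] * cs.signedWordProd ω := by
  ext t
  · have hcount : (cs.leftInvSeq ω).count ((s i)⁻¹ * t * s i) =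
        ((cs.leftInvSeq ω).map (MulAut.conj (s i))).count t := by
      conv_rhs => rw [show t = MulAut.conj (s i) ((s i)⁻¹ * t * s i) by
        simp [mul_assoc]]
      exact (List.count_map_of_injective _ _ (MulAut.conj _).injective _).symm
    simp only [signedWordProd, SemidirectProduct.mul_left, Pi.mul_apply, conjArrow_apply,
      wordProd_singleton, hcount]
    simp [leftInvSeq, List.count_cons, pow_add, mul_comm]
  · simp [signedWordProd, wordProd_cons]

lemma signedWordProd_append (ω ω' : List B) :
    cs.signedWordProd (ω ++ ω') = cs.signedWordProd ω * cs.signedWordProd ω' := by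
  induction ω with
  | nil => rw [List.nil_append, signedWordProd_nil, one_mul]
  | cons i ω ih =>
    rw [List.cons_append, signedWordProd_cons, ih, ← mul_assoc, ← signedWordProd_cons]

lemma signedWordProd_alternatingWord (i j : B) (p : ℕ) :
    cs.signedWordProd (alternatingWord i j (2 * p)) =
      (cs.signedWordProd [i] * cs.signedWordProd [j]) ^ p := by
  induction p with
  | zero => simp [alternatingWord, signedWordProd_nil]
  | succ p ih =>
    rw [mul_add, mul_one, alternatingWord_succ, alternatingWord_succ, pow_succ, ← ih,
      ← signedWordProd_append, ← signedWordProd_append]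
    simp

lemma leftInvSeq_alternatingWord (i j : B) (p : ℕ) :
    cs.leftInvSeq (alternatingWord i j (2 * p)) =
      (List.range (2 * p)).map fun k => s i * (s j * s i) ^ k := by
  refine List.ext_getElem (by simp) fun k hk _ => ?_
  rw [List.getElem_map, List.getElem_range, getElem_leftInvSeq_alternatingWord cs i j p k
    (by simpa using hk), prod_alternatingWord_eq_mul_pow]
  simp [Nat.add_div_of_dvd_right]

lemma even_count_leftInvSeq_alternatingWord (i j : B) (t : W) :
    Even ((cs.leftInvSeq (alternatingWord i j (2 * M i j))).count t) := by
  have hperiod : ∀ k, s i * (s j * s i) ^ (M i j + k) =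
      s i * (s j * s i) ^ k := by
    intro k
    rw [pow_add, M.symmetric, cs.simple_mul_simple_pow, one_mul]
  rw [leftInvSeq_alternatingWord, two_mul, List.range_add, List.map_append, List.map_map]
  simp only [Function.comp_def, hperiod, List.count_append]
  exact ⟨_, rfl⟩

lemma isLiftable_signedWordProd : M.IsLiftable fun i => cs.signedWordProd [i] := by
  intro i j
  rw [← signedWordProd_alternatingWord]
  ext t
  · simp [signedWordProd, (cs.even_count_leftInvSeq_alternatingWord i j t).neg_one_pow]
  · simp [signedWordProd, prod_alternatingWord_eq_mul_pow, cs.simple_mul_simple_pow]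

noncomputable def signHom : W →* (W → ℤˣ) ⋊[conjArrow] W :=
  cs.lift ⟨fun i => cs.signedWordProd [i], cs.isLiftable_signedWordProd⟩

lemma signHom_wordProd (ω : List B) : cs.signHom (cs.wordProd ω) = cs.signedWordProd ω := by
  induction ω with
  | nil => rw [wordProd_nil, map_one, signedWordProd_nil]
  | cons i ω ih =>
    rw [wordProd_cons, map_mul, ih, signedWordProd_cons (ω := ω)]
    simp [signHom]

lemma signHom_right (w : W) : (cs.signHom w).right = w := by
  obtain ⟨ω, rfl⟩ := cs.wordProd_surjective w
  rw [signHom_wordProd]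
  rfl

/-- The reflection cocycle `η(w, t)`. -/
noncomputable def inversionSign (w t : W) : ℤˣ := (cs.signHom w).left t

lemma inversionSign_wordProd (ω : List B) (t : W) :
    cs.inversionSign (cs.wordProd ω) t = (-1) ^ (cs.leftInvSeq ω).count t := by
  rw [inversionSign, signHom_wordProd]
  rfl

lemma inversionSign_one (t : W) : cs.inversionSign 1 t = 1 := by
  simpa using cs.inversionSign_wordProd [] t

lemma inversionSign_mul (u v t : W) :
    cs.inversionSign (u * v) t = cs.inversionSign u t * cs.inversionSign v (u⁻¹ * t * u) := by
  simp only [inversionSign, map_mul, SemidirectProduct.mul_left, Pi.mul_apply, conjArrow_apply,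
    signHom_right]

lemma inversionSign_inv (w t : W) : cs.inversionSign w⁻¹ t = cs.inversionSign w (w * t * w⁻¹) := by
  have h := cs.inversionSign_mul w w⁻¹ (w * t * w⁻¹)
  rw [mul_inv_cancel, inversionSign_one, show w⁻¹ * (w * t * w⁻¹) * w = t by group] at h
  rw [eq_inv_of_mul_eq_one_right h.symm, Int.units_inv_eq_self]

lemma inversionSign_self {t : W} (ht : cs.IsReflection t) : cs.inversionSign t t = -1 := by
  obtain ⟨w, i, rfl⟩ := ht
  have hsi : cs.inversionSign (s i) (s i) = -1 := by
    simpa [leftInvSeq] using cs.inversionSign_wordProd [i] (s i)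
  rw [inversionSign_mul, inversionSign_mul, inversionSign_inv,
    show w⁻¹ * (w * s i * w⁻¹) * w = s i by group, hsi,
    show (w * s i)⁻¹ * (w * s i * w⁻¹) * (w * s i) = s i by group,
    mul_right_comm, Int.units_mul_self, one_mul]

lemma mem_leftInvSeq_of_inversionSign_eq {ω : List B} {t : W}
    (h : cs.inversionSign (cs.wordProd ω) t = -1) : t ∈ cs.leftInvSeq ω := by
  rw [← List.count_pos_iff, Nat.pos_iff_ne_zero]
  intro h0
  rw [inversionSign_wordProd, h0, pow_zero] at h
  exact absurd h (by decide)

lemma isLeftInversion_of_inversionSign_eq {w t : W} (h : cs.inversionSign w t = -1) :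
    cs.IsLeftInversion w t := by
  obtain ⟨ω, hω, rfl⟩ := cs.exists_isReduced w
  exact cs.isLeftInversion_of_mem_leftInvSeq hω (cs.mem_leftInvSeq_of_inversionSign_eq h)

theorem isLeftInversion_iff_inversionSign {w t : W} :
    cs.IsLeftInversion w t ↔ cs.inversionSign w t = -1 := by
  refine ⟨fun ⟨ht, hlt⟩ => ?_, cs.isLeftInversion_of_inversionSign_eq⟩
  by_contra h
  have h1 : cs.inversionSign w t = 1 := (Int.units_eq_one_or _).resolve_right h
  have h2 : cs.inversionSign (t * w) t = -1 := by
    rw [inversionSign_mul, inversionSign_self cs ht, show t⁻¹ * t * t = t by group, h1, mul_one]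
  have := (cs.isLeftInversion_of_inversionSign_eq h2).2
  rw [← mul_assoc, ht.mul_self, one_mul] at this
  omega

/-- The strong exchange property. -/
theorem mem_leftInvSeq_of_isLeftInversion {ω : List B} {t : W}
    (h : cs.IsLeftInversion (cs.wordProd ω) t) : t ∈ cs.leftInvSeq ω :=
  cs.mem_leftInvSeq_of_inversionSign_eq (cs.isLeftInversion_iff_inversionSign.1 h)

theorem isLeftInversion_mul_iff {u v t : W} :
    cs.IsLeftInversion (u * v) t ↔
      (cs.IsLeftInversion u t ↔ ¬ cs.IsLeftInversion v (u⁻¹ * t * u)) := by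
  simp only [isLeftInversion_iff_inversionSign, inversionSign_mul]
  rcases Int.units_eq_one_or (cs.inversionSign u t) with h | h <;>
    rcases Int.units_eq_one_or (cs.inversionSign v (u⁻¹ * t * u)) with h' | h' <;>
    simp [h, h']

lemma setOf_isLeftInversion_wordProd {ω : List B} (hω : cs.IsReduced ω) :
    {t | cs.IsLeftInversion (cs.wordProd ω) t} = ↑(cs.leftInvSeq ω).toFinset := by
  ext t
  simpa using ⟨cs.mem_leftInvSeq_of_isLeftInversion, cs.isLeftInversion_of_mem_leftInvSeq hω⟩

lemma finite_setOf_isLeftInversion (w : W) : {t | cs.IsLeftInversion w t}.Finite := by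
  obtain ⟨ω, hω, rfl⟩ := cs.exists_isReduced w
  rw [cs.setOf_isLeftInversion_wordProd hω]
  exact Finset.finite_toSet _

theorem ncard_setOf_isLeftInversion (w : W) : {t | cs.IsLeftInversion w t}.ncard = ℓ w := by
  obtain ⟨ω, hω, rfl⟩ := cs.exists_isReduced w
  rw [cs.setOf_isLeftInversion_wordProd hω, Set.ncard_coe_finset,
    List.toFinset_card_of_nodup hω.nodup_leftInvSeq, length_leftInvSeq, hω]

lemma isRightInversion_iff_isLeftInversion_conj {w t : W} :
    cs.IsRightInversion w t ↔ cs.IsLeftInversion w (w * t * w⁻¹) := by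
  rw [IsRightInversion, IsLeftInversion, isReflection_conj_iff, inv_mul_cancel_right]

theorem length_mul_of_forall_not_isRightInversion {u v : W}
    (h : ∀ t, cs.IsLeftInversion v t → ¬ cs.IsRightInversion u t) : ℓ (u * v) = ℓ u + ℓ v := by
  have hexcl : ∀ t, cs.IsLeftInversion u t → ¬ cs.IsLeftInversion v (u⁻¹ * t * u) :=
    fun t hut hvt => h _ hvt <| by
      rwa [isRightInversion_iff_isLeftInversion_conj, show u * (u⁻¹ * t * u) * u⁻¹ = t by group]
  have hmem : ∀ t, t ∈ MulAut.conj u '' {t | cs.IsLeftInversion v t} ↔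
      cs.IsLeftInversion v (u⁻¹ * t * u) := fun t => by
    rw [← MulEquiv.coe_toEquiv, Set.mem_image_equiv]
    simp
  have hsplit : {t | cs.IsLeftInversion (u * v) t} =
      {t | cs.IsLeftInversion u t} ∪ MulAut.conj u '' {t | cs.IsLeftInversion v t} := by
    ext t
    have := hexcl t
    rw [Set.mem_ofPred_eq, isLeftInversion_mul_iff, Set.mem_union, Set.mem_ofPred_eq, hmem]
    tauto
  have hdisj : Disjoint {t | cs.IsLeftInversion u t}
      (MulAut.conj u '' {t | cs.IsLeftInversion v t}) :=
    Set.disjoint_left.2 fun t hut hvt => hexcl t hut ((hmem t).1 hvt)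
  rw [← ncard_setOf_isLeftInversion, hsplit,
    Set.ncard_union_eq hdisj (cs.finite_setOf_isLeftInversion u)
      ((cs.finite_setOf_isLeftInversion v).image _),
    Set.ncard_image_of_injective _ (MulAut.conj u).injective, ncard_setOf_isLeftInversion,
    ncard_setOf_isLeftInversion]

variable {cs}

lemma geometricRepresentation_apply_of_mem_parab {K : Set B} {w : W} (hw : w ∈ parab cs K)
    {i : B} (hi : i ∉ K) (v : B →₀ ℝ) :
    (cs.geometricRepresentation w : Module.End ℝ (B →₀ ℝ)) v i = v i := by
  have hgen : ∀ x ∈ cs.simple '' K, ∀ y, (∀ v : B →₀ ℝ,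
      (cs.geometricRepresentation y : Module.End ℝ (B →₀ ℝ)) v i = v i) →
      ∀ v : B →₀ ℝ, (cs.geometricRepresentation (x * y) : Module.End ℝ (B →₀ ℝ)) v i = v i := by
    rintro _ ⟨k, hk, rfl⟩ y hy v
    rw [map_mul, Units.val_mul, Module.End.mul_apply, geometricRepresentation_simple,
      CoxeterMatrix.geomReflection_apply_of_ne (ne_of_mem_of_not_mem hk hi).symm, hy]
  induction hw using Subgroup.closure_induction_left generalizing v with
  | one => simp
  | mul_left x hx y _ hy => exact hgen x hx y hy v
  | inv_mul_cancel x hx y _ hy =>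
    obtain ⟨k, hk, rfl⟩ := hx
    rw [inv_simple]
    exact hgen _ ⟨k, hk, rfl⟩ y hy v

theorem simple_mem_parab_iff {K : Set B} {i : B} : s i ∈ parab cs K ↔ i ∈ K := by
  refine ⟨fun h => ?_, fun h => Subgroup.subset_closure ⟨i, h, rfl⟩⟩
  by_contra hi
  have := geometricRepresentation_apply_of_mem_parab h hi (Finsupp.single i 1)
  rw [geometricRepresentation_simple, CoxeterMatrix.geomReflection_single_self] at this
  norm_num at this

lemma eq_simple_of_isLeftInversion_simple {i : B} {t : W} (ht : cs.IsLeftInversion (s i) t) :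
    t = s i := by
  have h := ht.2
  rw [length_simple, Nat.lt_one_iff, length_eq_zero_iff, mul_eq_one_iff_eq_inv, inv_simple] at h
  exact h

theorem mem_parab_of_isLeftInversion {K : Set B} {w t : W} (hw : w ∈ parab cs K)
    (ht : cs.IsLeftInversion w t) : t ∈ parab cs K := by
  have hgen : ∀ k ∈ K, ∀ y, (∀ t, cs.IsLeftInversion y t → t ∈ parab cs K) →
      ∀ t, cs.IsLeftInversion (s k * y) t → t ∈ parab cs K := by
    intro k hk y hy t ht
    have hsk : s k ∈ parab cs K := Subgroup.subset_closure ⟨k, hk, rfl⟩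
    have hcases : cs.IsLeftInversion (s k) t ∨ cs.IsLeftInversion y ((s k)⁻¹ * t * s k) := by
      have := cs.isLeftInversion_mul_iff.1 ht
      tauto
    rcases hcases with h | h
    · rw [eq_simple_of_isLeftInversion_simple h]
      exact hsk
    · simpa [mul_assoc] using mul_mem (mul_mem hsk (hy _ h)) (inv_mem hsk)
  refine Subgroup.closure_induction_left
    (p := fun w _ => ∀ t, cs.IsLeftInversion w t → t ∈ parab cs K) ?_ ?_ ?_ hw t ht
  · exact fun t ht => absurd ht.2 (by simp)
  · rintro _ ⟨k, hk, rfl⟩ y _ hy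
    exact hgen k hk y hy
  · rintro _ ⟨k, hk, rfl⟩ y _ hy
    rw [inv_simple]
    exact hgen k hk y hy

theorem mem_of_isLeftDescent_of_mem_parab {K : Set B} {w : W} {i : B} (hw : w ∈ parab cs K)
    (h : cs.IsLeftDescent w i) : i ∈ K :=
  simple_mem_parab_iff.1 <|
    mem_parab_of_isLeftInversion hw ((cs.isLeftInversion_simple_iff_isLeftDescent w i).2 h)

theorem mem_of_isRightDescent_of_mem_parab {K : Set B} {w : W} {i : B} (hw : w ∈ parab cs K)
    (h : cs.IsRightDescent w i) : i ∈ K :=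
  mem_of_isLeftDescent_of_mem_parab (inv_mem hw) (cs.isRightDescent_inv_iff.1 (by rwa [inv_inv]))

theorem length_mul_of_forall_length_le {K : Set B} {v x : W}
    (hmin : ∀ z ∈ parab cs K, ℓ v ≤ ℓ (v * z)) (hx : x ∈ parab cs K) : ℓ (v * x) = ℓ v + ℓ x :=
  cs.length_mul_of_forall_not_isRightInversion fun t ht hvt =>
    hvt.2.not_ge (hmin t (mem_parab_of_isLeftInversion hx ht))

theorem forall_length_le_of_not_isRightDescent {K : Set B} {v : W}
    (hv : ∀ k ∈ K, ¬ cs.IsRightDescent v k) : ∀ z ∈ parab cs K, ℓ v ≤ ℓ (v * z) := by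
  have hne : (parab cs K : Set W).Nonempty := ⟨1, one_mem _⟩
  obtain ⟨y, hy, hy_min⟩ : ∃ y ∈ parab cs K, ∀ z ∈ parab cs K, ℓ (v * y) ≤ ℓ (v * z) :=
    ⟨_, Function.argminOn_mem _ _ hne, fun z hz => Function.argminOn_le (fun z => ℓ (v * z)) _ hz⟩
  have hmin : ∀ z ∈ parab cs K, ℓ (v * y) ≤ ℓ (v * y * z) := fun z hz => by
    rw [mul_assoc]
    exact hy_min _ (mul_mem hy hz)
  suffices hy1 : y = 1 by
    intro z hz
    simpa [hy1] using hmin z hz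
  -- a right descent of `y⁻¹ ∈ W_K` lies in `K` and would be a right descent of `v = (v y) y⁻¹`
  by_contra hy1
  obtain ⟨i, hi⟩ := cs.exists_rightDescent_of_ne_one (inv_ne_one.2 hy1)
  have hsi : s i ∈ parab cs K :=
    Subgroup.subset_closure ⟨i, mem_of_isRightDescent_of_mem_parab (inv_mem hy) hi, rfl⟩
  apply hv i (simple_mem_parab_iff.1 hsi)
  have h1 := length_mul_of_forall_length_le hmin (inv_mem hy)
  have h2 := length_mul_of_forall_length_le hmin (mul_mem (inv_mem hy) hsi)
  rw [mul_inv_cancel_right] at h1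
  rw [← mul_assoc, mul_inv_cancel_right] at h2
  unfold IsRightDescent at hi ⊢
  omega

theorem length_mul_of_not_isRightDescent {K : Set B} {v x : W}
    (hv : ∀ k ∈ K, ¬ cs.IsRightDescent v k) (hx : x ∈ parab cs K) : ℓ (v * x) = ℓ v + ℓ x :=
  length_mul_of_forall_length_le (forall_length_le_of_not_isRightDescent hv) hx

theorem isRightBlock_of_forall_conj_simple {w : W} {K : Set B}
    (h : ∀ k ∈ K, ∃ j, w * s k * w⁻¹ = s j) : isRightBlock cs w K := by
  refine ⟨{j | ∃ k ∈ K, w * s k * w⁻¹ = s j}, ?_⟩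
  have hconj : (parab cs K).map (MulAut.conj w).toMonoidHom =
      parab cs {j | ∃ k ∈ K, w * s k * w⁻¹ = s j} := by
    rw [parab, parab, MonoidHom.map_closure, ← Set.image_comp]
    congr 1
    ext x
    constructor
    · rintro ⟨k, hk, rfl⟩
      obtain ⟨j, hj⟩ := h k hk
      exact ⟨j, ⟨k, hk, hj⟩, by simp [hj]⟩
    · rintro ⟨j, ⟨k, hk, hj⟩, rfl⟩
      exact ⟨k, hk, by simp [hj]⟩
  ext z
  simp only [Set.mem_image, SetLike.mem_coe, ← hconj, Subgroup.mem_map]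
  constructor
  · rintro ⟨p, hp, rfl⟩
    exact ⟨_, ⟨p, hp, rfl⟩, by simp⟩
  · rintro ⟨_, ⟨p, hp, rfl⟩, rfl⟩
    exact ⟨p, hp, by simp⟩

section Longest

variable {w0 : W} (hw0 : ∀ x : W, cs.length x ≤ cs.length w0)
include hw0

theorem isLeftInversion_longest {t : W} (ht : cs.IsReflection t) : cs.IsLeftInversion w0 t :=
  ⟨ht, (hw0 _).lt_of_ne (ht.length_mul_right_ne w0)⟩

theorem length_mul_longest (x : W) : ℓ (x * w0) + ℓ x = ℓ w0 := by
  have h := cs.length_mul_of_forall_not_isRightInversion (u := x⁻¹) (v := x * w0) fun t ht hxt => by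
    rw [isRightInversion_inv_iff] at hxt
    have hconj : cs.IsReflection (x⁻¹ * t * x) := by
      simpa using (cs.isReflection_conj_iff x⁻¹ t).2 ht.1
    exact (cs.isLeftInversion_mul_iff.1 ht).1 hxt (isLeftInversion_longest hw0 hconj)
  rw [inv_mul_cancel_left, length_inv] at h
  omega

theorem length_longest_mul (x : W) : ℓ (w0 * x) + ℓ x = ℓ w0 := by
  have h := length_mul_longest (w0 := w0⁻¹) (fun y => by rw [length_inv]; exact hw0 y) x⁻¹
  rwa [← mul_inv_rev, length_inv, length_inv, length_inv] at h

theorem exists_simple_eq_longest_conj (k : B) : ∃ j, w0 * s k * w0⁻¹ = s j := by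
  have h := length_longest_mul hw0 (s k * w0⁻¹)
  have hdesc : ℓ (w0 * s k) + 1 = ℓ w0 :=
    (cs.length_mul_simple w0 k).resolve_left fun h' => by have := hw0 (w0 * s k); omega
  rw [← mul_assoc, ← length_inv _ (s k * w0⁻¹), mul_inv_rev, inv_inv, inv_simple] at h
  exact cs.length_eq_one_iff.1 (by omega)

theorem isRightBlock_longest (K : Set B) : isRightBlock cs w0 K :=
  isRightBlock_of_forall_conj_simple fun k _ => exists_simple_eq_longest_conj hw0 k

variable {K : Set B} {v u : W} (hu : u ∈ parab cs K) (hdec : w0 = v * u)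
  (hv : ∀ k ∈ K, ¬ cs.IsRightDescent v k)
include hu hdec hv

theorem length_le_of_mem_parab {x : W} (hx : x ∈ parab cs K) : ℓ x ≤ ℓ u := by
  have h1 := length_mul_of_not_isRightDescent hv hx
  have h2 := length_mul_of_not_isRightDescent hv hu
  have := hw0 (v * x)
  rw [hdec] at this
  omega

theorem setOf_isRightDescent_eq_compl : {i | cs.IsRightDescent v i} = Kᶜ := by
  ext i
  refine ⟨fun hi hiK => hv i hiK hi, fun hiK => ?_⟩
  by_contra hi
  have hsu : ℓ (s i * u) = ℓ u + 1 :=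
    (cs.length_simple_mul u i).resolve_right fun h => hiK <|
      mem_of_isLeftDescent_of_mem_parab hu (by unfold IsLeftDescent; omega)
  have hv' : ∀ k ∈ insert i K, ¬ cs.IsRightDescent v k := by
    rintro k (rfl | hk)
    exacts [hi, hv k hk]
  have hsu_mem : s i * u ∈ parab cs (insert i K) :=
    mul_mem (Subgroup.subset_closure ⟨i, Set.mem_insert i K, rfl⟩)
      (Subgroup.closure_mono (Set.image_mono (Set.subset_insert i K)) hu)
  have h1 := length_mul_of_not_isRightDescent hv' hsu_mem
  have h2 := length_mul_of_not_isRightDescent hv hu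
  have := hw0 (v * (s i * u))
  rw [hdec] at this
  omega

theorem leL_of_not_isRightDescent {x : W} (hx : ∀ k ∈ K, ¬ cs.IsRightDescent x k) :
    leL cs x v := by
  have h1 := length_mul_of_not_isRightDescent hx hu
  have h2 := length_mul_of_not_isRightDescent hv hu
  have h3 := length_longest_mul hw0 (x * u)⁻¹
  rw [hdec, show v * u * (x * u)⁻¹ = v * x⁻¹ by group, length_inv] at h3
  unfold leL
  omega

end Longest

end CoxeterSystem

theorem longest_element_blocks_general {B W : Type*} [Group W] {M : CoxeterMatrix B}
    (cs : CoxeterSystem M W) (w0 : W) (hw0 : ∀ x : W, cs.length x ≤ cs.length w0)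
    (K : Set B) (vK u : W) (hu : u ∈ parab cs K) (hdec : w0 = vK * u)
    (hvK : ∀ k ∈ K, ¬ cs.IsRightDescent vK k) :
    isRightBlock cs w0 K ∧
    (∀ x ∈ parab cs K, cs.length x ≤ cs.length u) ∧
    {i : B | cs.IsRightDescent vK i} = Kᶜ ∧
    (∀ x : W, {i : B | cs.IsRightDescent x i} = Kᶜ → leL cs x vK) := by
  refine ⟨CoxeterSystem.isRightBlock_longest hw0 K,
    fun x => CoxeterSystem.length_le_of_mem_parab hw0 hu hdec hvK,
    CoxeterSystem.setOf_isRightDescent_eq_compl hw0 hu hdec hvK, fun x hx => ?_⟩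
  refine CoxeterSystem.leL_of_not_isRightDescent hw0 hu hdec hvK fun k hk hd => ?_
  exact (hx ▸ hd : k ∈ Kᶜ) hk

/-- For the longest element `w₀`, every `K ⊆ I` is a right block; in the decomposition
`w₀ = w₀^K · (_K w₀)` the factor `_K w₀` is the longest element of `W_K`, and `w₀^K` is
the maximal element (in left weak order) of the right descent class for the complement
of `K`. -/
theorem longest_element_blocks {B W : Type*} [Group W] [Finite W] {M : CoxeterMatrix B}
    (cs : CoxeterSystem M W) (w0 : W) (hw0 : ∀ x : W, cs.length x ≤ cs.length w0)
    (K : Set B) (vK u : W) (hu : u ∈ parab cs K) (hdec : w0 = vK * u)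
    (hvK : ∀ k ∈ K, ¬ cs.IsRightDescent vK k) :
    isRightBlock cs w0 K ∧
    (∀ x ∈ parab cs K, cs.length x ≤ cs.length u) ∧
    {i : B | cs.IsRightDescent vK i} = Kᶜ ∧
    (∀ x : W, {i : B | cs.IsRightDescent x i} = Kᶜ → leL cs x vK) :=
  longest_element_blocks_general cs w0 hw0 K vK u hu hdec hvK
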